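/- arXiv:2403.09058 — 5 statements merged into one kernel-verified Lean document; each statement's English description precedes it below -/
import Mathlib

section
/- Let Nc, Lu, Lb be positive integers with Nc ≥ Lu + Lb, let t be an integer, and let a(k) (1 ≤ k ≤ Lu−1) and b(k) (1 ≤ k ≤ Lb−1) be real numbers. Then Σ_{k1=1}^{Lu−1} Σ_{k2=1, k2≠k1}^{Lu−1} Σ_{k3=1}^{Lb−1} ( Σ_{s=0}^{Nc−1} exp(−2πi·(k2−k1−k3)·(s−t)/Nc) )·a(k1)·a(k2)·b(k3) = Nc·Σ_{k1=1}^{Lu−1} Σ_{k2=k1+1}^{min(Lu, Lb+k1)−1} a(k1)·a(k2)·b(k2−k1). -/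
/-! The inner sum over `s` is a character sum of `ℤ/Nc`: it equals `Nc` when `Nc ∣ k2 - k1 - k3` and
vanishes otherwise. Since `Lu + Lb ≤ Nc`, the frequency `k2 - k1 - k3` is too small to be a nonzero
multiple of `Nc`, so only the terms with `k3 = k2 - k1` survive, and these are exactly the ones on
the right-hand side. -/

open Finset

theorem IsPrimitiveRoot.sum_range_zpow_mul_sub {K : Type*} [Field K] {ω : K} {N : ℕ}
    (hω : IsPrimitiveRoot ω N) (d t : ℤ) :
    ∑ s ∈ range N, ω ^ (d * ((s : ℤ) - t)) = if (N : ℤ) ∣ d then (N : K) else 0 := by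
  rcases N.eq_zero_or_pos with rfl | hN
  · simp
  split_ifs with hd
  · have hone : ∀ s : ℕ, ω ^ (d * ((s : ℤ) - t)) = 1 := fun s =>
      (hω.zpow_eq_one_iff_dvd _).2 (hd.mul_right _)
    simp [hone]
  · have hω0 : ω ≠ 0 := hω.ne_zero hN.ne'
    have hζ : ω ^ d ≠ 1 := mt (hω.zpow_eq_one_iff_dvd d).1 hd
    have hζN : (ω ^ d) ^ N = 1 := by
      rw [← zpow_natCast, ← zpow_mul, mul_comm, zpow_mul, hω.zpow_eq_one, one_zpow]
    calc ∑ s ∈ range N, ω ^ (d * ((s : ℤ) - t))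
        = (∑ s ∈ range N, (ω ^ d) ^ s) * ω ^ (-(d * t)) := by
          rw [sum_mul]
          refine sum_congr rfl fun s _ => ?_
          rw [← zpow_natCast, ← zpow_mul, ← zpow_add₀ hω0]
          ring_nf
      _ = 0 := by rw [geom_sum_eq hζ, hζN, sub_self, zero_div, zero_mul]

theorem Complex.sum_range_exp_neg_two_pi_I_mul_sub (N : ℕ) (d t : ℤ) :
    ∑ s ∈ range N, Complex.exp (-2 * (Real.pi : ℂ) * Complex.I * d * ((s : ℂ) - t) / N) =
      if (N : ℤ) ∣ d then (N : ℂ) else 0 := by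
  rcases N.eq_zero_or_pos with rfl | hN
  · simp
  have hN' : (N : ℂ) ≠ 0 := by exact_mod_cast hN.ne'
  have hsum := (Complex.isPrimitiveRoot_exp N hN.ne').sum_range_zpow_mul_sub (-d) t
  simp only [Int.dvd_neg] at hsum
  rw [← hsum]
  refine sum_congr rfl fun s _ => ?_
  rw [← Complex.exp_int_mul]
  congr 1
  push_cast
  field_simp

theorem sum_Ico_sum_erase_sum_Ico_ite_add_eq {M : Type*} [AddCommMonoid M] (Lu Lb : ℕ)
    (f : ℕ → ℕ → ℕ → M) :
    ∑ k1 ∈ Ico 1 Lu, ∑ k2 ∈ (Ico 1 Lu).erase k1, ∑ k3 ∈ Ico 1 Lb,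
        (if k1 + k3 = k2 then f k1 k2 k3 else 0) =
      ∑ k1 ∈ Ico 1 Lu, ∑ k2 ∈ Ico (k1 + 1) (min Lu (Lb + k1)), f k1 k2 (k2 - k1) := by
  refine sum_congr rfl fun k1 _ => ?_
  rw [sum_comm]
  simp only [sum_ite_eq, ← sum_filter]
  refine sum_nbij' (k1 + ·) (· - k1) (fun k hk => ?_) (fun k hk => ?_)
    (fun k _ => Nat.add_sub_cancel_left k1 k) (fun k hk => ?_)
    (fun k _ => by rw [Nat.add_sub_cancel_left])
  all_goals
    simp only [mem_filter, mem_Ico, mem_erase, lt_min_iff] at hk ⊢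
    omega

theorem dft_sum_collapse_offdiag_u_general
    (Nc Lu Lb : ℕ)
    (hLen : Lu + Lb ≤ Nc) (t : ℤ) (a b : ℕ → ℝ) :
    ∑ k1 ∈ Finset.Ico 1 Lu, ∑ k2 ∈ (Finset.Ico 1 Lu).erase k1, ∑ k3 ∈ Finset.Ico 1 Lb,
        (∑ s ∈ Finset.range Nc,
            Complex.exp (-2 * (Real.pi : ℂ) * Complex.I *
              ((k2 : ℂ) - (k1 : ℂ) - (k3 : ℂ)) * ((s : ℂ) - (t : ℂ)) / (Nc : ℂ))) *
          (a k1 : ℂ) * (a k2 : ℂ) * (b k3 : ℂ) =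
      (Nc : ℂ) * ∑ k1 ∈ Finset.Ico 1 Lu, ∑ k2 ∈ Finset.Ico (k1 + 1) (min Lu (Lb + k1)),
        (a k1 : ℂ) * (a k2 : ℂ) * (b (k2 - k1) : ℂ) := by
  have hchar : ∀ k1 ∈ Ico 1 Lu, ∀ k2 ∈ (Ico 1 Lu).erase k1, ∀ k3 ∈ Ico 1 Lb,
      ∑ s ∈ range Nc, Complex.exp (-2 * (Real.pi : ℂ) * Complex.I *
        ((k2 : ℂ) - (k1 : ℂ) - (k3 : ℂ)) * ((s : ℂ) - (t : ℂ)) / (Nc : ℂ)) =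
        if k1 + k3 = k2 then (Nc : ℂ) else 0 := by
    intro k1 hk1 k2 hk2 k3 hk3
    simp only [mem_Ico, mem_erase] at hk1 hk2 hk3
    have hd : ((k2 : ℂ) - k1 - k3) = ((k2 - k1 - k3 : ℤ) : ℂ) := by push_cast; ring
    have hdvd : (Nc : ℤ) ∣ k2 - k1 - k3 ↔ k1 + k3 = k2 := by
      refine ⟨fun h => ?_, fun h => ⟨0, by omega⟩⟩
      have := Int.eq_zero_of_dvd_of_natAbs_lt_natAbs h (by omega)
      omega
    simp only [hd, Complex.sum_range_exp_neg_two_pi_I_mul_sub, hdvd]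
  calc _ = ∑ k1 ∈ Ico 1 Lu, ∑ k2 ∈ (Ico 1 Lu).erase k1, ∑ k3 ∈ Ico 1 Lb,
        (if k1 + k3 = k2 then (Nc : ℂ) * ((a k1 : ℂ) * (a k2 : ℂ) * (b k3 : ℂ)) else 0) := by
        refine sum_congr rfl fun k1 hk1 => sum_congr rfl fun k2 hk2 =>
          sum_congr rfl fun k3 hk3 => ?_
        rw [hchar k1 hk1 k2 hk2 k3 hk3]
        split_ifs <;> ring
    _ = ∑ k1 ∈ Ico 1 Lu, ∑ k2 ∈ Ico (k1 + 1) (min Lu (Lb + k1)),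
        (Nc : ℂ) * ((a k1 : ℂ) * (a k2 : ℂ) * (b (k2 - k1) : ℂ)) :=
        sum_Ico_sum_erase_sum_Ico_ite_add_eq Lu Lb
          fun k1 k2 k3 => (Nc : ℂ) * ((a k1 : ℂ) * (a k2 : ℂ) * (b k3 : ℂ))
    _ = _ := by simp only [mul_sum]

/-- **Lemma 1, eq. (57) of the paper.**  For `Nc ≥ Lu + Lb` and any integer `t`,
`Σ_{k1=1}^{Lu−1} Σ_{k2≠k1} Σ_{k3=1}^{Lb−1} (Σ_{s=0}^{Nc−1} e^{−2πi(k2−k1−k3)(s−t)/Nc}) a(k1) a(k2) b(k3)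
  = Nc · Σ_{k1=1}^{Lu−1} Σ_{k2=k1+1}^{min(Lu,Lb+k1)−1} a(k1) a(k2) b(k2−k1)`. -/
theorem dft_sum_collapse_offdiag_u
    (Nc Lu Lb : ℕ) (hNc : 0 < Nc) (hLu : 0 < Lu) (hLb : 0 < Lb)
    (hLen : Lu + Lb ≤ Nc) (t : ℤ) (a b : ℕ → ℝ) :
    ∑ k1 ∈ Finset.Ico 1 Lu, ∑ k2 ∈ (Finset.Ico 1 Lu).erase k1, ∑ k3 ∈ Finset.Ico 1 Lb,
        (∑ s ∈ Finset.range Nc,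
            Complex.exp (-2 * (Real.pi : ℂ) * Complex.I *
              ((k2 : ℂ) - (k1 : ℂ) - (k3 : ℂ)) * ((s : ℂ) - (t : ℂ)) / (Nc : ℂ))) *
          (a k1 : ℂ) * (a k2 : ℂ) * (b k3 : ℂ) =
      (Nc : ℂ) * ∑ k1 ∈ Finset.Ico 1 Lu, ∑ k2 ∈ Finset.Ico (k1 + 1) (min Lu (Lb + k1)),
        (a k1 : ℂ) * (a k2 : ℂ) * (b (k2 - k1) : ℂ) :=
  dft_sum_collapse_offdiag_u_general Nc Lu Lb hLen t a b
end

section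
/- Let Nc, Lu, Lb be positive integers with Nc ≥ Lu + Lb, let t be an integer, and let a(k) (1 ≤ k ≤ Lu−1) and b(k) (1 ≤ k ≤ Lb−1) be real numbers. Then Σ_{k1=1}^{Lb−1} Σ_{k2=1, k2≠k1}^{Lb−1} Σ_{k3=1}^{Lu−1} ( Σ_{s=0}^{Nc−1} exp(−2πi·(k1−k2−k3)·(s−t)/Nc) )·b(k1)·b(k2)·a(k3) = Nc·Σ_{k1=1}^{Lb−1} Σ_{k2=k1+1}^{min(Lb, Lu+k1)−1} b(k1)·b(k2)·a(k2−k1). -/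
/-! Since `|k1 - k2 - k3| < Lu + Lb ≤ Nc`, the inner sum over `s` is a geometric sum of an
`Nc`-th root of unity that is `≠ 1` unless `k1 = k2 + k3`; so it equals `Nc` on `k1 = k2 + k3` and
vanishes otherwise. The sum over `k3` then collapses to `k3 = k1 - k2`, and exchanging `k1` and
`k2` gives the right-hand side. -/

open Finset

open Complex Real in
theorem sum_range_exp_eq_zero_of_not_dvd {N : ℕ} {m : ℤ} (hm : ¬ (N : ℤ) ∣ m) (t : ℂ) :
    ∑ s ∈ range N, exp (-2 * π * I * m * (s - t) / N) = 0 := by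
  obtain rfl | hN := eq_or_ne N 0
  · simp
  have hω : IsPrimitiveRoot (exp (2 * π * I / N)) N := isPrimitiveRoot_exp N hN
  set ζ := exp (2 * π * I / N) ^ (-m)
  have hζ : ζ ≠ 1 := by rwa [Ne, hω.zpow_eq_one_iff_dvd, dvd_neg]
  have hζN : ζ ^ N = 1 := by
    rw [← zpow_natCast, ← zpow_mul, mul_comm (-m), zpow_mul, zpow_natCast, hω.pow_eq_one, one_zpow]
  have hterm (s : ℕ) : exp (-2 * π * I * m * (s - t) / N) = exp (2 * π * I * m * t / N) * ζ ^ s := by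
    rw [← zpow_natCast, ← zpow_mul, ← Complex.exp_int_mul, ← Complex.exp_add]
    congr 1
    push_cast
    ring
  rw [sum_congr rfl fun s _ => hterm s, ← mul_sum, geom_sum_eq hζ, hζN, sub_self, zero_div, mul_zero]

open Complex Real in
theorem sum_range_exp_eq_ite_of_natAbs_lt {N : ℕ} {m : ℤ} (hm : m.natAbs < N) (t : ℂ) :
    ∑ s ∈ range N, exp (-2 * π * I * m * (s - t) / N) =
      if m = 0 then (N : ℂ) else 0 := by
  split_ifs with h
  · simp [h]
  · exact sum_range_exp_eq_zero_of_not_dvd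
      (fun hd => h (Int.eq_zero_of_dvd_of_natAbs_lt_natAbs hd (by simpa using hm))) t

theorem sum_Ico_ite_add_eq {M : Type*} [AddCommMonoid M] (f : ℕ → M) (n k j : ℕ) :
    ∑ i ∈ Ico 1 n, (if k + i = j then f i else 0) =
      if j ∈ Ico (k + 1) (k + n) then f (j - k) else 0 := by
  split_ifs with hj
  · rw [mem_Ico] at hj
    rw [sum_eq_single_of_mem (j - k) (by rw [mem_Ico]; omega), if_pos (by omega)]
    exact fun i _ hi => if_neg (by omega)
  · exact sum_eq_zero fun i hi => if_neg (by rw [mem_Ico] at hi hj; omega)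

theorem sum_offDiag_sum_ite_add_eq {M : Type*} [AddCommMonoid M] (F : ℕ → ℕ → ℕ → M)
    (Lu Lb : ℕ) :
    ∑ k1 ∈ Ico 1 Lb, ∑ k2 ∈ (Ico 1 Lb).erase k1, ∑ k3 ∈ Ico 1 Lu,
        (if k2 + k3 = k1 then F k1 k2 k3 else 0) =
      ∑ k2 ∈ Ico 1 Lb, ∑ k1 ∈ Ico (k2 + 1) (min Lb (Lu + k2)), F k1 k2 (k1 - k2) := by
  calc _ = ∑ k1 ∈ Ico 1 Lb, ∑ k2 ∈ Ico 1 Lb,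
        if k1 ∈ Ico (k2 + 1) (k2 + Lu) then F k1 k2 (k1 - k2) else 0 := by
        refine sum_congr rfl fun k1 _ => ?_
        simp only [sum_Ico_ite_add_eq]
        exact sum_erase _ (if_neg (by simp))
    _ = ∑ k2 ∈ Ico 1 Lb, ∑ k1 ∈ (Ico 1 Lb).filter (· ∈ Ico (k2 + 1) (k2 + Lu)),
        F k1 k2 (k1 - k2) := by
        rw [sum_comm]
        simp only [sum_filter]
    _ = _ := by
        refine sum_congr rfl fun k2 _ => sum_congr ?_ fun _ _ => rfl
        ext k1
        simp only [mem_filter, mem_Ico, lt_min_iff]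
        omega

theorem dft_sum_collapse_offdiag_b_general
    (Nc Lu Lb : ℕ)
    (hLen : Lu + Lb ≤ Nc) (t : ℤ) (a b : ℕ → ℝ) :
    ∑ k1 ∈ Finset.Ico 1 Lb, ∑ k2 ∈ (Finset.Ico 1 Lb).erase k1, ∑ k3 ∈ Finset.Ico 1 Lu,
        (∑ s ∈ Finset.range Nc,
            Complex.exp (-2 * (Real.pi : ℂ) * Complex.I *
              ((k1 : ℂ) - (k2 : ℂ) - (k3 : ℂ)) * ((s : ℂ) - (t : ℂ)) / (Nc : ℂ))) *
          (b k1 : ℂ) * (b k2 : ℂ) * (a k3 : ℂ) =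
      (Nc : ℂ) * ∑ k1 ∈ Finset.Ico 1 Lb, ∑ k2 ∈ Finset.Ico (k1 + 1) (min Lb (Lu + k1)),
        (b k1 : ℂ) * (b k2 : ℂ) * (a (k2 - k1) : ℂ) := by
  have hdft : ∀ k1 ∈ Ico 1 Lb, ∀ k2 ∈ Ico 1 Lb, ∀ k3 ∈ Ico 1 Lu,
      ∑ s ∈ range Nc, Complex.exp (-2 * (Real.pi : ℂ) * Complex.I *
          ((k1 : ℂ) - (k2 : ℂ) - (k3 : ℂ)) * ((s : ℂ) - (t : ℂ)) / (Nc : ℂ)) =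
        if k2 + k3 = k1 then (Nc : ℂ) else 0 := by
    intro k1 hk1 k2 hk2 k3 hk3
    rw [mem_Ico] at hk1 hk2 hk3
    have h := sum_range_exp_eq_ite_of_natAbs_lt (N := Nc) (m := k1 - k2 - k3) (by omega) t
    push_cast at h
    rw [h]
    exact if_congr (by omega) rfl rfl
  calc _ = ∑ k1 ∈ Ico 1 Lb, ∑ k2 ∈ (Ico 1 Lb).erase k1, ∑ k3 ∈ Ico 1 Lu,
        if k2 + k3 = k1 then (Nc : ℂ) * b k1 * b k2 * a k3 else 0 := by
        refine sum_congr rfl fun k1 hk1 => sum_congr rfl fun k2 hk2 => sum_congr rfl fun k3 hk3 => ?_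
        rw [hdft k1 hk1 k2 (mem_of_mem_erase hk2) k3 hk3]
        simp only [ite_mul, zero_mul]
    _ = ∑ k2 ∈ Ico 1 Lb, ∑ k1 ∈ Ico (k2 + 1) (min Lb (Lu + k2)),
        (Nc : ℂ) * b k1 * b k2 * a (k1 - k2) := sum_offDiag_sum_ite_add_eq _ Lu Lb
    _ = _ := by
        simp only [mul_sum]
        exact sum_congr rfl fun _ _ => sum_congr rfl fun _ _ => by ring

/-- **Lemma 1, eq. (58) of the paper.**  For `Nc ≥ Lu + Lb` and any integer `t`,
`Σ_{k1=1}^{Lb−1} Σ_{k2≠k1} Σ_{k3=1}^{Lu−1} (Σ_{s=0}^{Nc−1} e^{−2πi(k1−k2−k3)(s−t)/Nc}) b(k1) b(k2) a(k3)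
  = Nc · Σ_{k1=1}^{Lb−1} Σ_{k2=k1+1}^{min(Lb,Lu+k1)−1} b(k1) b(k2) a(k2−k1)`. -/
theorem dft_sum_collapse_offdiag_b
    (Nc Lu Lb : ℕ) (hNc : 0 < Nc) (hLu : 0 < Lu) (hLb : 0 < Lb)
    (hLen : Lu + Lb ≤ Nc) (t : ℤ) (a b : ℕ → ℝ) :
    ∑ k1 ∈ Finset.Ico 1 Lb, ∑ k2 ∈ (Finset.Ico 1 Lb).erase k1, ∑ k3 ∈ Finset.Ico 1 Lu,
        (∑ s ∈ Finset.range Nc,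
            Complex.exp (-2 * (Real.pi : ℂ) * Complex.I *
              ((k1 : ℂ) - (k2 : ℂ) - (k3 : ℂ)) * ((s : ℂ) - (t : ℂ)) / (Nc : ℂ))) *
          (b k1 : ℂ) * (b k2 : ℂ) * (a k3 : ℂ) =
      (Nc : ℂ) * ∑ k1 ∈ Finset.Ico 1 Lb, ∑ k2 ∈ Finset.Ico (k1 + 1) (min Lb (Lu + k1)),
        (b k1 : ℂ) * (b k2 : ℂ) * (a (k2 - k1) : ℂ) :=
  dft_sum_collapse_offdiag_b_general Nc Lu Lb hLen t a b
end

section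
/- Let Nc, Lu, Lb be positive integers with Nc ≥ Lu + Lb, let t be an integer, and let a(k) (1 ≤ k ≤ Lu−1) and b(k) (1 ≤ k ≤ Lb−1) be real numbers. Then Σ_{k1=1}^{Lb−1} Σ_{k2=1, k2≠k1}^{Lb−1} Σ_{k3=1}^{Lu−1} Σ_{k4=1, k4≠k3}^{Lu−1} ( Σ_{s=0}^{Nc−1} exp(−2πi·(k1−k2+k3−k4)·(s−t)/Nc) )·b(k1)·b(k2)·a(k3)·a(k4) = 2·Nc·Σ_{k1=1}^{Lb−1} Σ_{k2=k1+1}^{min(Lb, Lu+k1−1)−1} Σ_{k3=k2−k1+1}^{Lu−1} b(k1)·b(k2)·a(k3)·a(k1−k2+k3). -/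
/-!
Since all the `kᵢ` lie in `[1, L)` and `Lu + Lb ≤ Nc`, the frequency `k1 − k2 + k3 − k4` has
absolute value below `Nc`, so by orthogonality of the `Nc`-th roots of unity the sum over `s` is
`Nc` when `k1 + k3 = k2 + k4` and `0` otherwise. What is left for a pair `(k1, k2)` is a
correlation of `a` at lag `k2 − k1`, symmetric in the pair, so the sum over ordered pairs
`k1 ≠ k2` is twice the sum over `k1 < k2`. For `k1 < k2` the constraint `k4 = k1 + k3 − k2 ≥ 1`
forces `k3 > k2 − k1`, which leaves nothing once `k2 ≥ Lu + k1 − 1`.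
-/

open Finset Complex Real

theorem sum_range_exp_neg_two_pi_I_mul_sub_div (N : ℕ) (m t : ℤ) :
    ∑ s ∈ range N, exp (-2 * π * I * m * ((s : ℂ) - t) / N) =
      if (N : ℤ) ∣ m then (N : ℂ) else 0 := by
  rcases eq_or_ne N 0 with rfl | hN
  · simp
  set ζ := exp (2 * π * I / N)
  have hζ : IsPrimitiveRoot ζ N := isPrimitiveRoot_exp N hN
  have hterm (s : ℕ) :
      exp (-2 * π * I * m * ((s : ℂ) - t) / N) = (ζ ^ (-m)) ^ s * ζ ^ (m * t) := by
    rw [← zpow_natCast, ← zpow_mul, ← zpow_add₀ (hζ.ne_zero hN), ← exp_int_mul]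
    congr 1
    push_cast
    ring
  simp_rw [hterm, ← sum_mul]
  split_ifs with hdvd
  · have hm : ζ ^ m = 1 := (hζ.zpow_eq_one_iff_dvd m).2 hdvd
    simp [zpow_neg, zpow_mul, hm]
  · have hne : ζ ^ (-m) ≠ 1 := by
      rwa [Ne, hζ.zpow_eq_one_iff_dvd, dvd_neg]
    have hpow : (ζ ^ (-m)) ^ N = 1 := by
      rw [← zpow_natCast, ← zpow_mul, mul_comm, zpow_mul, zpow_natCast, hζ.pow_eq_one, one_zpow]
    rw [geom_sum_eq hne, hpow, sub_self, zero_div, zero_mul]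

theorem sum_range_exp_neg_two_pi_I_mul_sub_div_of_lt {N m n : ℕ} (hm : m < N + n)
    (hn : n < N + m) (t : ℤ) :
    ∑ s ∈ range N, exp (-2 * π * I * ((m : ℂ) - n) * ((s : ℂ) - t) / N) =
      if m = n then (N : ℂ) else 0 := by
  have hdvd : (N : ℤ) ∣ (m - n : ℤ) ↔ m = n :=
    ⟨fun h => by have := Int.eq_zero_of_abs_lt_dvd h (abs_lt.2 ⟨by omega, by omega⟩); omega,
      fun h => ⟨0, by omega⟩⟩
  have hcast : (m : ℂ) - n = ((m - n : ℤ) : ℂ) := by push_cast; ring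
  rw [hcast, sum_range_exp_neg_two_pi_I_mul_sub_div, if_congr hdvd rfl rfl]

theorem sum_Ico_sum_erase_eq_two_mul {R : Type*} [NonAssocSemiring R] (m n : ℕ)
    (g : ℕ → ℕ → R) (hg : ∀ i j, g i j = g j i) :
    ∑ i ∈ Ico m n, ∑ j ∈ (Ico m n).erase i, g i j =
      2 * ∑ i ∈ Ico m n, ∑ j ∈ Ico (i + 1) n, g i j := by
  have hlower : ∑ i ∈ Ico m n, ∑ j ∈ Ico m i, g i j =
      ∑ i ∈ Ico m n, ∑ j ∈ Ico (i + 1) n, g i j := by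
    rw [sum_comm' (t' := Ico m n) (s' := fun j => Ico (j + 1) n)]
    · simp only [hg]
    · intro i j
      simp only [mem_Ico]
      omega
  calc ∑ i ∈ Ico m n, ∑ j ∈ (Ico m n).erase i, g i j
      = ∑ i ∈ Ico m n, (∑ j ∈ Ico m i, g i j + ∑ j ∈ Ico (i + 1) n, g i j) := by
        refine sum_congr rfl fun i hi => ?_
        rw [← sum_union (disjoint_left.2 fun j hj hj' => by
          simp only [mem_Ico] at hj hj'
          omega)]
        congr 1
        ext j
        simp only [mem_erase, mem_Ico, mem_union] at hi ⊢
        omega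
    _ = 2 * ∑ i ∈ Ico m n, ∑ j ∈ Ico (i + 1) n, g i j := by
        rw [sum_add_distrib, hlower, two_mul]

section LagCorrelation

variable {R : Type*} [CommSemiring R]

def lagCorrelation (L : ℕ) (a : ℕ → R) (p q : ℕ) : R :=
  ∑ k ∈ Ico 1 L, ∑ l ∈ Ico 1 L, if p + k = q + l then a k * a l else 0

theorem lagCorrelation_comm (L : ℕ) (a : ℕ → R) (p q : ℕ) :
    lagCorrelation L a p q = lagCorrelation L a q p := by
  rw [lagCorrelation, sum_comm]
  refine sum_congr rfl fun l _ => sum_congr rfl fun k _ => ?_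
  split_ifs <;> first | rfl | exact mul_comm _ _ | omega

theorem lagCorrelation_of_le (L : ℕ) (a : ℕ → R) {p q : ℕ} (h : p ≤ q) :
    lagCorrelation L a p q = ∑ k ∈ Ico (q - p + 1) L, a k * a (p + k - q) := by
  rw [lagCorrelation, ← sum_subset (Ico_subset_Ico_left (Nat.le_add_left 1 _))]
  · refine sum_congr rfl fun k hk => ?_
    rw [mem_Ico] at hk
    rw [sum_eq_single_of_mem (p + k - q) (by rw [mem_Ico]; omega), if_pos (by omega)]
    exact fun l _ hl => if_neg (by omega)
  · intro k hk hk'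
    simp only [mem_Ico] at hk hk'
    exact sum_eq_zero fun l hl => if_neg (by simp only [mem_Ico] at hl; omega)

theorem sum_Ico_mul_lagCorrelation (L M p : ℕ) (a f : ℕ → R) :
    ∑ q ∈ Ico (p + 1) M, f q * lagCorrelation L a p q =
      ∑ q ∈ Ico (p + 1) (min M (L + p - 1)), ∑ k ∈ Ico (q - p + 1) L,
        f q * a k * a (p + k - q) := by
  have hcollapse : ∀ q ∈ Ico (p + 1) M, f q * lagCorrelation L a p q =
      ∑ k ∈ Ico (q - p + 1) L, f q * a k * a (p + k - q) := by
    intro q hq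
    rw [mem_Ico] at hq
    simp only [lagCorrelation_of_le _ _ (by omega : p ≤ q), mul_sum, mul_assoc]
  rw [sum_congr rfl hcollapse]
  refine (sum_subset (Ico_subset_Ico_right (min_le_left _ _)) fun q hq hq' => ?_).symm
  simp only [mem_Ico] at hq hq'
  rw [Ico_eq_empty (by omega), sum_empty]

end LagCorrelation

theorem sum_Ico_sum_erase_dft_mul (x y : ℂ) (c : ℕ → ℂ) {N L p q : ℕ} (hpq : p ≠ q)
    (hp : p + L ≤ N) (hq : q + L ≤ N) (t : ℤ) :
    ∑ k ∈ Ico 1 L, ∑ l ∈ (Ico 1 L).erase k,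
        (∑ s ∈ range N, exp (-2 * π * I * ((p : ℂ) - q + k - l) * ((s : ℂ) - t) / N)) *
          x * y * c k * c l =
      N * (x * y * lagCorrelation L c p q) := by
  have hkernel : ∀ k ∈ Ico 1 L, ∀ l ∈ Ico 1 L,
      ∑ s ∈ range N, exp (-2 * π * I * ((p : ℂ) - q + k - l) * ((s : ℂ) - t) / N) =
        if p + k = q + l then (N : ℂ) else 0 := by
    intro k hk l hl
    simp only [mem_Ico] at hk hl
    have hcast : (p : ℂ) - q + k - l = ((p + k : ℕ) : ℂ) - ((q + l : ℕ) : ℂ) := by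
      push_cast
      ring
    rw [hcast, sum_range_exp_neg_two_pi_I_mul_sub_div_of_lt (by omega) (by omega)]
  simp only [lagCorrelation, mul_sum]
  refine sum_congr rfl fun k hk => ?_
  rw [sum_erase _ (by rw [hkernel k hk k hk, if_neg (by omega)]; ring)]
  refine sum_congr rfl fun l hl => ?_
  rw [hkernel k hk l hl]
  split_ifs <;> ring

theorem dft_sum_collapse_quadruple_general
    (Nc Lu Lb : ℕ)
    (hLen : Lu + Lb ≤ Nc) (t : ℤ) (a b : ℕ → ℝ) :
    ∑ k1 ∈ Finset.Ico 1 Lb, ∑ k2 ∈ (Finset.Ico 1 Lb).erase k1,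
      ∑ k3 ∈ Finset.Ico 1 Lu, ∑ k4 ∈ (Finset.Ico 1 Lu).erase k3,
        (∑ s ∈ Finset.range Nc,
            Complex.exp (-2 * (Real.pi : ℂ) * Complex.I *
              ((k1 : ℂ) - (k2 : ℂ) + (k3 : ℂ) - (k4 : ℂ)) * ((s : ℂ) - (t : ℂ)) / (Nc : ℂ))) *
          (b k1 : ℂ) * (b k2 : ℂ) * (a k3 : ℂ) * (a k4 : ℂ) =
      2 * (Nc : ℂ) * ∑ k1 ∈ Finset.Ico 1 Lb,
        ∑ k2 ∈ Finset.Ico (k1 + 1) (min Lb (Lu + k1 - 1)),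
          ∑ k3 ∈ Finset.Ico (k2 - k1 + 1) Lu,
            (b k1 : ℂ) * (b k2 : ℂ) * (a k3 : ℂ) * (a (k1 + k3 - k2) : ℂ) := by
  set A : ℕ → ℂ := fun k => (a k : ℂ)
  calc _ = ∑ k1 ∈ Ico 1 Lb, ∑ k2 ∈ (Ico 1 Lb).erase k1,
        (Nc : ℂ) * ((b k1 : ℂ) * b k2 * lagCorrelation Lu A k1 k2) := by
        refine sum_congr rfl fun k1 hk1 => sum_congr rfl fun k2 hk2 => ?_
        have hk2' := mem_of_mem_erase hk2
        rw [mem_Ico] at hk1 hk2'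
        exact sum_Ico_sum_erase_dft_mul _ _ A (ne_of_mem_erase hk2).symm (by omega) (by omega) t
    _ = 2 * Nc * ∑ k1 ∈ Ico 1 Lb, ∑ k2 ∈ Ico (k1 + 1) Lb,
        (b k1 : ℂ) * b k2 * lagCorrelation Lu A k1 k2 := by
        simp_rw [← mul_sum]
        rw [sum_Ico_sum_erase_eq_two_mul _ _ _ fun i j => by rw [lagCorrelation_comm]; ring]
        ring
    _ = _ := by
        simp_rw [sum_Ico_mul_lagCorrelation]
        rfl

/-- **Lemma 1, eq. (59) of the paper.**  For `Nc ≥ Lu + Lb` and any integer `t`,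
`Σ_{k1=1}^{Lb−1} Σ_{k2≠k1} Σ_{k3=1}^{Lu−1} Σ_{k4≠k3}
    (Σ_{s=0}^{Nc−1} e^{−2πi(k1−k2+k3−k4)(s−t)/Nc}) b(k1) b(k2) a(k3) a(k4)
  = 2 Nc Σ_{k1=1}^{Lb−1} Σ_{k2=k1+1}^{min(Lb,Lu+k1−1)−1} Σ_{k3=k2−k1+1}^{Lu−1}
      b(k1) b(k2) a(k3) a(k1−k2+k3)`. -/
theorem dft_sum_collapse_quadruple
    (Nc Lu Lb : ℕ) (hNc : 0 < Nc) (hLu : 0 < Lu) (hLb : 0 < Lb)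
    (hLen : Lu + Lb ≤ Nc) (t : ℤ) (a b : ℕ → ℝ) :
    ∑ k1 ∈ Finset.Ico 1 Lb, ∑ k2 ∈ (Finset.Ico 1 Lb).erase k1,
      ∑ k3 ∈ Finset.Ico 1 Lu, ∑ k4 ∈ (Finset.Ico 1 Lu).erase k3,
        (∑ s ∈ Finset.range Nc,
            Complex.exp (-2 * (Real.pi : ℂ) * Complex.I *
              ((k1 : ℂ) - (k2 : ℂ) + (k3 : ℂ) - (k4 : ℂ)) * ((s : ℂ) - (t : ℂ)) / (Nc : ℂ))) *
          (b k1 : ℂ) * (b k2 : ℂ) * (a k3 : ℂ) * (a k4 : ℂ) =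
      2 * (Nc : ℂ) * ∑ k1 ∈ Finset.Ico 1 Lb,
        ∑ k2 ∈ Finset.Ico (k1 + 1) (min Lb (Lu + k1 - 1)),
          ∑ k3 ∈ Finset.Ico (k2 - k1 + 1) Lu,
            (b k1 : ℂ) * (b k2 : ℂ) * (a k3 : ℂ) * (a (k1 + k3 - k2) : ℂ) :=
  dft_sum_collapse_quadruple_general Nc Lu Lb hLen t a b
end

section
/- For all integers s and t: E[ conj(g(s))·g(t) ] = β·σ(0)^2/(K+1) + β·Σ_{k=1}^{L−1} exp(−2πi·k·(t−s)/N)·σ(k)^2. -/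
/-!
Write `g(t) = Σ_k c(t,k) h(k)` with `h(k) = σ(k)(X(k) + iY(k))/√2`. Since the `2L` real variables
`X(k), Y(k)` are independent, centred and of unit variance, `E[X_j X_k] = E[Y_j Y_k] = δ_jk`
and `E[X_j Y_k] = 0`, so `E[conj(X_j + iY_j)(X_k + iY_k)] = 2δ_jk`. Expanding the sesquilinear
form gives `E[conj(g(s)) g(t)] = Σ_k conj(c(s,k)) c(t,k) σ(k)²`, and `conj(c(s,k)) c(t,k)` is
`β/(K+1)` for `k = 0` and `β e^{−2πik(t−s)/N}` otherwise.
-/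

open MeasureTheory ProbabilityTheory Complex Finset

noncomputable section

/-- The frequency-domain channel coefficient
`g(t) = √(β/(K+1)) h(0) + √(Nβ) Σ_{k=1}^{L−1} f(t,k) h(k)`, where
`h(k) = σ(k)(X(k)+iY(k))/√2` and `f(t,k) = N^{-1/2} e^{-2πi t k/N}`. -/
def gChan (N L : ℕ) (β K : ℝ) (σ : ℕ → ℝ) {Ω : Type*} (X Y : ℕ → Ω → ℝ)
    (t : ℤ) (ω : Ω) : ℂ :=
  (Real.sqrt (β / (K + 1)) : ℂ) *
      ((σ 0 : ℂ) * ((X 0 ω : ℂ) + (Y 0 ω : ℂ) * Complex.I) / (Real.sqrt 2 : ℂ))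
    + (Real.sqrt (N * β) : ℂ) *
        ∑ k ∈ Finset.Ico 1 L,
          ((1 / Real.sqrt N : ℂ) *
              Complex.exp (-2 * (Real.pi : ℂ) * Complex.I * (t : ℂ) * (k : ℂ) / (N : ℂ))) *
            ((σ k : ℂ) * ((X k ω : ℂ) + (Y k ω : ℂ) * Complex.I) / (Real.sqrt 2 : ℂ))

open scoped NNReal ENNReal ComplexConjugate

section

variable {Ω : Type*} {mΩ : MeasurableSpace Ω} {μ : Measure Ω}

lemma ProbabilityTheory.HasLaw.of_map_eq {𝓧 : Type*} [MeasurableSpace 𝓧] {X : Ω → 𝓧}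
    {ν : Measure 𝓧} [NeZero ν] (h : μ.map X = ν) : HasLaw X ν μ :=
  ⟨AEMeasurable.of_map_ne_zero (h ▸ NeZero.ne ν), h⟩

section Gaussian

variable {W : Ω → ℝ} {m : ℝ} {v : ℝ≥0}

lemma ProbabilityTheory.HasLaw.memLp_of_gaussianReal (hW : HasLaw W (gaussianReal m v) μ)
    {p : ℝ≥0∞} (hp : p ≠ ∞) : MemLp W p μ := by
  have h := memLp_id_gaussianReal' (μ := m) (v := v) p hp
  rw [← hW.map_eq] at h
  exact h.comp_of_map hW.aemeasurable

lemma ProbabilityTheory.HasLaw.integral_of_gaussianReal (hW : HasLaw W (gaussianReal m v) μ) :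
    μ[W] = m :=
  hW.integral_eq.trans integral_id_gaussianReal

lemma ProbabilityTheory.HasLaw.variance_of_gaussianReal (hW : HasLaw W (gaussianReal m v) μ) :
    Var[W; μ] = v :=
  hW.variance_eq.trans variance_id_gaussianReal

end Gaussian

lemma integral_mul_eq_ite_of_iIndepFun {ι : Type*} [DecidableEq ι] {Z : ι → Ω → ℝ} {v : ℝ}
    (hind : iIndepFun Z μ) (hL2 : ∀ i, MemLp (Z i) 2 μ) (hmean : ∀ i, μ[Z i] = 0)
    (hvar : ∀ i, Var[Z i; μ] = v) (i j : ι) :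
    ∫ ω, Z i ω * Z j ω ∂μ = if i = j then v else 0 := by
  by_cases hij : i = j
  · subst hij
    rw [if_pos rfl, ← hvar i, variance_of_integral_eq_zero (hL2 i).aemeasurable (hmean i)]
    simp only [sq]
  · rw [if_neg hij, (hind.indepFun hij).integral_fun_mul_eq_mul_integral
      (hL2 i).aestronglyMeasurable (hL2 j).aestronglyMeasurable, hmean i, zero_mul]

lemma integral_conj_add_mul_I_mul {A B C D : Ω → ℝ} (hA : MemLp A 2 μ) (hB : MemLp B 2 μ)
    (hC : MemLp C 2 μ) (hD : MemLp D 2 μ) :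
    ∫ ω, conj ((A ω : ℂ) + B ω * I) * ((C ω : ℂ) + D ω * I) ∂μ =
      ((∫ ω, A ω * C ω ∂μ + ∫ ω, B ω * D ω ∂μ : ℝ) : ℂ)
        + ((∫ ω, A ω * D ω ∂μ - ∫ ω, B ω * C ω ∂μ : ℝ) : ℂ) * I := by
  have hAC : Integrable (fun ω => A ω * C ω) μ := hA.integrable_mul hC
  have hBD : Integrable (fun ω => B ω * D ω) μ := hB.integrable_mul hD
  have hAD : Integrable (fun ω => A ω * D ω) μ := hA.integrable_mul hD
  have hBC : Integrable (fun ω => B ω * C ω) μ := hB.integrable_mul hC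
  have hre : Integrable (fun ω => ((A ω * C ω + B ω * D ω : ℝ) : ℂ)) μ := (hAC.add hBD).ofReal
  have him : Integrable (fun ω => ((A ω * D ω - B ω * C ω : ℝ) : ℂ) * I) μ :=
    (hAD.sub hBC).ofReal.mul_const I
  have hpt : ∀ ω, conj ((A ω : ℂ) + B ω * I) * ((C ω : ℂ) + D ω * I) =
      ((A ω * C ω + B ω * D ω : ℝ) : ℂ) + ((A ω * D ω - B ω * C ω : ℝ) : ℂ) * I := by
    intro ω
    simp only [map_add, map_mul, conj_ofReal, conj_I]
    push_cast
    linear_combination (-(B ω * D ω : ℂ)) * I_sq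
  simp_rw [hpt]
  rw [integral_add hre him, integral_mul_const, integral_complex_ofReal, integral_complex_ofReal,
    integral_add hAC hBD, integral_sub hAD hBC]

lemma integral_conj_mul_of_iIndepFun_gaussianReal {ι : Type*} [DecidableEq ι]
    {Z : ι × Bool → Ω → ℝ} {v : ℝ≥0} (hind : iIndepFun Z μ)
    (hZ : ∀ q, HasLaw (Z q) (gaussianReal 0 v) μ) (j k : ι) :
    ∫ ω, conj ((Z (j, false) ω : ℂ) + Z (j, true) ω * I) *
        ((Z (k, false) ω : ℂ) + Z (k, true) ω * I) ∂μ
      = if j = k then 2 * (v : ℂ) else 0 := by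
  have hL2 : ∀ q, MemLp (Z q) 2 μ := fun q => (hZ q).memLp_of_gaussianReal ENNReal.ofNat_ne_top
  have horth := integral_mul_eq_ite_of_iIndepFun hind hL2
    (fun q => (hZ q).integral_of_gaussianReal) (fun q => (hZ q).variance_of_gaussianReal)
  rw [integral_conj_add_mul_I_mul (hL2 _) (hL2 _) (hL2 _) (hL2 _), horth, horth, horth, horth]
  simp only [Prod.mk.injEq, and_true, and_false, Bool.false_eq_true, Bool.true_eq_false,
    if_false, sub_self, ofReal_zero, zero_mul, add_zero]
  split_ifs <;> push_cast <;> ring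

lemma MeasureTheory.MemLp.ofReal_add_ofReal_mul_I {A B : Ω → ℝ} {p : ℝ≥0∞}
    (hA : MemLp A p μ) (hB : MemLp B p μ) : MemLp (fun ω => (A ω : ℂ) + B ω * I) p μ := by
  have hA' : MemLp (fun ω => (A ω : ℂ)) p μ := hA.ofReal
  exact hA'.add (hB.ofReal.mul_const I)

lemma integral_conj_sum_mul_sum {ι : Type*} [DecidableEq ι] (s : Finset ι) {ξ : ι → Ω → ℂ}
    (hξ : ∀ k ∈ s, MemLp (ξ k) 2 μ) {v : ι → ℂ}
    (hcov : ∀ j ∈ s, ∀ k ∈ s, ∫ ω, conj (ξ j ω) * ξ k ω ∂μ = if j = k then v k else 0)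
    (a b : ι → ℂ) :
    ∫ ω, conj (∑ j ∈ s, a j * ξ j ω) * ∑ k ∈ s, b k * ξ k ω ∂μ
      = ∑ k ∈ s, conj (a k) * b k * v k := by
  have hint : ∀ j ∈ s, ∀ k ∈ s, Integrable (fun ω => conj (a j) * b k * (conj (ξ j ω) * ξ k ω)) μ :=
    fun j hj k hk => ((hξ j hj).star.integrable_mul (hξ k hk)).const_mul _
  calc ∫ ω, conj (∑ j ∈ s, a j * ξ j ω) * ∑ k ∈ s, b k * ξ k ω ∂μ
      = ∫ ω, ∑ j ∈ s, ∑ k ∈ s, conj (a j) * b k * (conj (ξ j ω) * ξ k ω) ∂μ := by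
        congr 1 with ω
        rw [map_sum, sum_mul_sum]
        refine sum_congr rfl fun j _ => sum_congr rfl fun k _ => ?_
        rw [map_mul]
        ring
    _ = ∑ j ∈ s, ∑ k ∈ s, conj (a j) * b k * ∫ ω, conj (ξ j ω) * ξ k ω ∂μ := by
        rw [integral_finsetSum _ fun j hj => integrable_finsetSum _ (hint j hj)]
        refine sum_congr rfl fun j hj => ?_
        rw [integral_finsetSum _ (hint j hj)]
        exact sum_congr rfl fun k _ => integral_const_mul _ _
    _ = ∑ k ∈ s, conj (a k) * b k * v k := by
        refine sum_congr rfl fun j hj => ?_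
        rw [sum_congr rfl fun k hk => by rw [hcov j hj k hk]]
        simp only [mul_ite, mul_zero, sum_ite_eq, hj, if_true]

def chanCoeff (N : ℕ) (β K : ℝ) (t : ℤ) (k : ℕ) : ℂ :=
  if k = 0 then (Real.sqrt (β / (K + 1)) : ℂ)
  else (Real.sqrt (N * β) : ℂ) *
    ((1 / Real.sqrt N : ℂ) * exp (-2 * (Real.pi : ℂ) * I * (t : ℂ) * (k : ℂ) / (N : ℂ)))

lemma gChan_eq_sum {N L : ℕ} (hL : 1 ≤ L) (β K : ℝ) (σ : ℕ → ℝ) (X Y : ℕ → Ω → ℝ) (t : ℤ) (ω : Ω) :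
    gChan N L β K σ X Y t ω = ∑ k ∈ range L,
      chanCoeff N β K t k * ((σ k : ℂ) / (Real.sqrt 2 : ℂ)) * ((X k ω : ℂ) + Y k ω * I) := by
  rw [sum_range_eq_add_Ico _ hL, gChan]
  congr 1
  · rw [chanCoeff, if_pos rfl]
    ring
  · rw [mul_sum]
    refine sum_congr rfl fun k hk => ?_
    rw [chanCoeff, if_neg (by grind)]
    ring

lemma conj_chanCoeff_mul_chanCoeff_zero {β K : ℝ} (hβK : 0 ≤ β / (K + 1)) (N : ℕ) (s t : ℤ) :
    conj (chanCoeff N β K s 0) * chanCoeff N β K t 0 = (β / (K + 1) : ℝ) := by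
  rw [chanCoeff, chanCoeff, if_pos rfl, if_pos rfl, conj_ofReal, ← ofReal_mul,
    Real.mul_self_sqrt hβK]

lemma chanCoeff_of_ne_zero {N : ℕ} (hN : N ≠ 0) (β K : ℝ) (t : ℤ) {k : ℕ} (hk : k ≠ 0) :
    chanCoeff N β K t k =
      Real.sqrt β * exp (-2 * (Real.pi : ℂ) * I * (t : ℂ) * (k : ℂ) / (N : ℂ)) := by
  have hsqrtN : (Real.sqrt N : ℂ) ≠ 0 := by simp [hN]
  rw [chanCoeff, if_neg hk, Real.sqrt_mul (Nat.cast_nonneg N), ofReal_mul]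
  field_simp

lemma conj_chanCoeff_mul_chanCoeff {N : ℕ} (hN : N ≠ 0) {β : ℝ} (hβ : 0 ≤ β) (K : ℝ) (s t : ℤ)
    {k : ℕ} (hk : k ≠ 0) :
    conj (chanCoeff N β K s k) * chanCoeff N β K t k
      = β * exp (-2 * (Real.pi : ℂ) * I * (k : ℂ) * ((t : ℂ) - (s : ℂ)) / (N : ℂ)) := by
  have hβ' : (Real.sqrt β : ℂ) * Real.sqrt β = β := by rw [← ofReal_mul, Real.mul_self_sqrt hβ]
  rw [chanCoeff_of_ne_zero hN β K s hk, chanCoeff_of_ne_zero hN β K t hk, map_mul, conj_ofReal,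
    ← exp_conj, mul_mul_mul_comm, hβ', ← exp_add]
  congr 2
  simp only [map_div₀, map_mul, map_neg, map_ofNat, conj_ofReal, conj_I, map_intCast, map_natCast]
  ring

lemma conj_mul_div_sqrt_two_mul_mul_two (a b : ℂ) (r : ℝ) :
    conj (a * ((r : ℂ) / (Real.sqrt 2 : ℂ))) * (b * ((r : ℂ) / (Real.sqrt 2 : ℂ))) * 2
      = conj a * b * ((r ^ 2 : ℝ) : ℂ) := by
  have h2 : (Real.sqrt 2 : ℂ) ^ 2 = 2 := by
    rw [← ofReal_pow, Real.sq_sqrt zero_le_two, ofReal_ofNat]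
  have h2' : (Real.sqrt 2 : ℂ) ≠ 0 := by simp
  rw [map_mul, map_div₀, conj_ofReal, conj_ofReal]
  field_simp
  rw [h2]
  push_cast
  ring

end

theorem expectation_conj_g_mul_g_general
    {Ω : Type*} [MeasurableSpace Ω] (μ : Measure Ω) [IsProbabilityMeasure μ]
    (N L : ℕ) (hN : 1 ≤ N) (hL : 1 ≤ L) (β K : ℝ) (hβ : 0 < β) (hK : 0 ≤ K)
    (σ : ℕ → ℝ)
    (X Y : ℕ → Ω → ℝ)
    (hXlaw : ∀ k < L, Measure.map (X k) μ = gaussianReal 0 1)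
    (hYlaw : ∀ k < L, Measure.map (Y k) μ = gaussianReal 0 1)
    (hindep : iIndepFun
      (fun q : Fin L × Bool => cond q.2 (Y (q.1 : ℕ)) (X (q.1 : ℕ))) μ)
    (s t : ℤ) :
    ∫ ω, (starRingEnd ℂ) (gChan N L β K σ X Y s ω) * gChan N L β K σ X Y t ω ∂μ =
      ((β * σ 0 ^ 2 / (K + 1) : ℝ) : ℂ)
        + (β : ℂ) * ∑ k ∈ Finset.Ico 1 L,
            Complex.exp (-2 * (Real.pi : ℂ) * Complex.I * (k : ℂ) * ((t : ℂ) - (s : ℂ)) / (N : ℂ)) *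
              ((σ k ^ 2 : ℝ) : ℂ) := by
  set Z : Fin L × Bool → Ω → ℝ := fun q => cond q.2 (Y q.1) (X q.1)
  have hZ : ∀ q, HasLaw (Z q) (gaussianReal 0 1) μ := by
    rintro ⟨k, _ | _⟩
    exacts [.of_map_eq (hXlaw k k.2), .of_map_eq (hYlaw k k.2)]
  have hξ : ∀ k ∈ range L, MemLp (fun ω => (X k ω : ℂ) + Y k ω * I) 2 μ := by
    intro k hk
    exact .ofReal_add_ofReal_mul_I
      ((HasLaw.of_map_eq (hXlaw k (mem_range.1 hk))).memLp_of_gaussianReal ENNReal.ofNat_ne_top)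
      ((HasLaw.of_map_eq (hYlaw k (mem_range.1 hk))).memLp_of_gaussianReal ENNReal.ofNat_ne_top)
  have hcov : ∀ j ∈ range L, ∀ k ∈ range L,
      ∫ ω, conj ((X j ω : ℂ) + Y j ω * I) * ((X k ω : ℂ) + Y k ω * I) ∂μ
        = if j = k then (2 : ℂ) else 0 := by
    intro j hj k hk
    simpa [Z, Fin.ext_iff] using integral_conj_mul_of_iIndepFun_gaussianReal hindep hZ
      ⟨j, mem_range.1 hj⟩ ⟨k, mem_range.1 hk⟩
  simp_rw [gChan_eq_sum hL]
  rw [integral_conj_sum_mul_sum _ hξ hcov, sum_range_eq_add_Ico _ hL]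
  simp_rw [conj_mul_div_sqrt_two_mul_mul_two]
  congr 1
  · rw [conj_chanCoeff_mul_chanCoeff_zero (by positivity)]
    push_cast
    ring
  · rw [mul_sum]
    refine sum_congr rfl fun k hk => ?_
    rw [conj_chanCoeff_mul_chanCoeff (by omega) hβ.le K s t (by grind)]
    ring

/-- **Lemma 2, eq. (61) of the paper:**
`E[conj(g(s)) g(t)] = β σ(0)²/(K+1) + β Σ_{k=1}^{L−1} e^{−2πik(t−s)/N} σ(k)²`. -/
theorem expectation_conj_g_mul_g
    {Ω : Type*} [MeasurableSpace Ω] (μ : Measure Ω) [IsProbabilityMeasure μ]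
    (N L : ℕ) (hN : 1 ≤ N) (hL : 1 ≤ L) (β K : ℝ) (hβ : 0 < β) (hK : 0 ≤ K)
    (σ : ℕ → ℝ) (hσ : ∀ k < L, 0 ≤ σ k)
    (X Y : ℕ → Ω → ℝ)
    (hXm : ∀ k < L, Measurable (X k)) (hYm : ∀ k < L, Measurable (Y k))
    (hXlaw : ∀ k < L, Measure.map (X k) μ = gaussianReal 0 1)
    (hYlaw : ∀ k < L, Measure.map (Y k) μ = gaussianReal 0 1)
    (hindep : iIndepFun
      (fun q : Fin L × Bool => cond q.2 (Y (q.1 : ℕ)) (X (q.1 : ℕ))) μ)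
    (s t : ℤ) :
    ∫ ω, (starRingEnd ℂ) (gChan N L β K σ X Y s ω) * gChan N L β K σ X Y t ω ∂μ =
      ((β * σ 0 ^ 2 / (K + 1) : ℝ) : ℂ)
        + (β : ℂ) * ∑ k ∈ Finset.Ico 1 L,
            Complex.exp (-2 * (Real.pi : ℂ) * Complex.I * (k : ℂ) * ((t : ℂ) - (s : ℂ)) / (N : ℂ)) *
              ((σ k ^ 2 : ℝ) : ℂ) :=
  expectation_conj_g_mul_g_general μ N L hN hL β K hβ hK σ X Y hXlaw hYlaw hindep s t
end
end

section
/- Let N ≥ 1, Lu ≥ 1, Lb ≥ 1 and Ncp ≥ 0 be integers with Ncp ≥ Lu + Lb − 2. Let s : ZMod N → ℂ, hu : ℕ → ℂ, hb : ℕ → ℂ, and let d : ℤ → ℂ be any function satisfying d(m) = s((m − Ncp) mod N) for every integer m with 0 ≤ m ≤ N + Ncp − 1 (no condition on d elsewhere; here (m − Ncp) mod N denotes the reduction of the integer m − Ncp modulo N, viewed in ZMod N). Define y1 : ℤ → ℂ by y1(m) = Σ_{l1=0}^{Lu−1} hu(l1)·d(m − l1) and y2 : ℤ → ℂ by y2(m)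 = Σ_{l2=0}^{Lb−1} hb(l2)·y1(m − l2). Then for every integer m with Ncp ≤ m ≤ N + Ncp − 1: y2(m) = Σ_{l2=0}^{Lb−1} Σ_{l1=0}^{Lu−1} hb(l2)·hu(l1)·s((m − Ncp − l2 − l1) mod N). In other words, a cyclic prefix of length at least Lu + Lb − 2 turns the cascade of the two linear convolutions into the cyclic convolution of s with the cascaded channel taps on the observation window. -/
open Finset

theorem cascade_conv_eq_sum_sum {R : Type*} [CommSemiring R] (Lu Lb : ℕ) (hu hb : ℕ → R)
    (d y1 y2 : ℤ → R) (hy1 : ∀ m, y1 m = ∑ l1 ∈ range Lu, hu l1 * d (m - l1))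
    (hy2 : ∀ m, y2 m = ∑ l2 ∈ range Lb, hb l2 * y1 (m - l2)) (m : ℤ) :
    y2 m = ∑ l2 ∈ range Lb, ∑ l1 ∈ range Lu, hb l2 * hu l1 * d (m - l2 - l1) := by
  simp only [hy2, hy1, mul_sum, mul_assoc]

theorem cyclic_prefix_linear_conv_eq_cyclic_conv_general
    (N Lu Lb Ncp : ℕ)
    (hNcp : Lu + Lb - 2 ≤ Ncp)
    (s : ZMod N → ℂ) (hu hb : ℕ → ℂ) (d : ℤ → ℂ)
    (hd : ∀ m : ℤ, 0 ≤ m → m ≤ (N : ℤ) + (Ncp : ℤ) - 1 →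
      d m = s (((m - (Ncp : ℤ)) : ℤ) : ZMod N))
    (y1 : ℤ → ℂ) (hy1 : ∀ m : ℤ, y1 m = ∑ l1 ∈ Finset.range Lu, hu l1 * d (m - (l1 : ℤ)))
    (y2 : ℤ → ℂ) (hy2 : ∀ m : ℤ, y2 m = ∑ l2 ∈ Finset.range Lb, hb l2 * y1 (m - (l2 : ℤ))) :
    ∀ m : ℤ, (Ncp : ℤ) ≤ m → m ≤ (N : ℤ) + (Ncp : ℤ) - 1 →
      y2 m = ∑ l2 ∈ Finset.range Lb, ∑ l1 ∈ Finset.range Lu,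
        hb l2 * hu l1 * s (((m - (Ncp : ℤ) - (l2 : ℤ) - (l1 : ℤ)) : ℤ) : ZMod N) := by
  intro m hm_lo hm_hi
  rw [cascade_conv_eq_sum_sum Lu Lb hu hb d y1 y2 hy1 hy2 m]
  refine sum_congr rfl fun l2 hl2 => sum_congr rfl fun l1 hl1 => ?_
  rw [mem_range] at hl1 hl2
  -- the delay `l2 + l1 ≤ Lu + Lb - 2 ≤ Ncp` keeps every tap inside the transmitted block
  rw [hd (m - l2 - l1) (by omega) (by omega), sub_right_comm _ (Ncp : ℤ),
    sub_right_comm _ (Ncp : ℤ)]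

/-- **Cyclic-prefix lemma:** if the cyclic prefix has length `Ncp ≥ Lu + Lb − 2`, then on the
observation window `Ncp ≤ m ≤ N + Ncp − 1` the cascade of the two linear convolutions through
the user-RIS and RIS-BS channels equals the cyclic convolution of the OFDM symbol `s` with the
cascaded channel taps. -/
theorem cyclic_prefix_linear_conv_eq_cyclic_conv
    (N Lu Lb Ncp : ℕ) (hN : 1 ≤ N) (hLu : 1 ≤ Lu) (hLb : 1 ≤ Lb)
    (hNcp : Lu + Lb - 2 ≤ Ncp)
    (s : ZMod N → ℂ) (hu hb : ℕ → ℂ) (d : ℤ → ℂ)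
    (hd : ∀ m : ℤ, 0 ≤ m → m ≤ (N : ℤ) + (Ncp : ℤ) - 1 →
      d m = s (((m - (Ncp : ℤ)) : ℤ) : ZMod N))
    (y1 : ℤ → ℂ) (hy1 : ∀ m : ℤ, y1 m = ∑ l1 ∈ Finset.range Lu, hu l1 * d (m - (l1 : ℤ)))
    (y2 : ℤ → ℂ) (hy2 : ∀ m : ℤ, y2 m = ∑ l2 ∈ Finset.range Lb, hb l2 * y1 (m - (l2 : ℤ))) :
    ∀ m : ℤ, (Ncp : ℤ) ≤ m → m ≤ (N : ℤ) + (Ncp : ℤ) - 1 →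
      y2 m = ∑ l2 ∈ Finset.range Lb, ∑ l1 ∈ Finset.range Lu,
        hb l2 * hu l1 * s (((m - (Ncp : ℤ) - (l2 : ℤ) - (l1 : ℤ)) : ℤ) : ZMod N) :=
  cyclic_prefix_linear_conv_eq_cyclic_conv_general N Lu Lb Ncp hNcp s hu hb d hd y1 hy1 y2 hy2
end
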